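/- If n = p^m is a power of an odd prime p (with m ≥ 1), then the chromatic number of the 2-derangement graph satisfies χ(Γ_{2,n}) = C(n,2) = n(n−1)/2. -/

import Mathlib

def IsKDerangement (n k : ℕ) (σ : Equiv.Perm (Fin n)) : Prop :=
  ∀ X : Finset (Fin n), X.card = k → X.image σ ≠ X

lemma IsKDerangement.inv {n k : ℕ} {σ : Equiv.Perm (Fin n)}
    (h : IsKDerangement n k σ) : IsKDerangement n k σ⁻¹ := by
  intro X hX hfix
  refine h X hX ?_
  nth_rewrite 1 [← hfix]
  rw [Finset.image_image]
  simp [Function.comp_def]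

def derangementGraph (n k : ℕ) : SimpleGraph (Equiv.Perm (Fin n)) where
  Adj σ τ := σ ≠ τ ∧ IsKDerangement n k (σ * τ⁻¹)
  symm := ⟨by
    rintro σ τ ⟨hne, h⟩
    exact ⟨hne.symm, by simpa [mul_inv_rev] using h.inv⟩⟩
  loopless := ⟨by rintro σ ⟨hne, -⟩; exact hne rfl⟩

noncomputable def numKDerangements (n k : ℕ) : ℕ :=
  Nat.card {σ : Equiv.Perm (Fin n) // IsKDerangement n k σ}

noncomputable def indepNum {V : Type*} (G : SimpleGraph V) : ℕ :=
  sSup {m | ∃ s : Finset V, (∀ a ∈ s, ∀ b ∈ s, a ≠ b → ¬ G.Adj a b) ∧ s.card = m}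

/-!
Colouring `σ` by the pair `σ(X₀)`, for a fixed pair `X₀`, is proper, since equal colours mean that
`στ⁻¹` stabilises the pair `τ(X₀)`; so `χ ≤ C(n,2)`. Conversely, identify `Fin n` with the field
`F = 𝔽_n`. The affine map `x ↦ a x + b` stabilises a pair `{x, y}` only if it fixes both points
(then it is the identity) or swaps them (then `a = -1`). Hence the maps `x ↦ u x + b` with `u`
running over a set of representatives of `Fˣ / {±1}` form a clique of size `n (n - 1) / 2`.
-/

open Finset Equiv

theorem chromaticNumber_derangementGraph_le_choose {n k : ℕ} (hk : k ≤ n) :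
    (derangementGraph n k).chromaticNumber ≤ n.choose k := by
  obtain ⟨X₀, -, hX₀⟩ := exists_subset_card_eq (s := (univ : Finset (Fin n))) (by simpa using hk)
  have card_image (σ : Perm (Fin n)) : (X₀.image σ).card = k := by
    rw [card_image_of_injective _ σ.injective, hX₀]
  let C : (derangementGraph n k).Coloring {Y : Finset (Fin n) // Y.card = k} :=
    SimpleGraph.Coloring.mk (fun σ => ⟨X₀.image σ, card_image σ⟩) <| by
      rintro σ τ ⟨-, hστ⟩ heq
      refine hστ (X₀.image τ) (card_image τ) ?_
      rw [image_image, ← Perm.coe_mul, inv_mul_cancel_right]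
      exact congrArg Subtype.val heq
  simpa [Fintype.card_finset_len] using C.colorable.chromaticNumber_le

lemma derangementGraph_adj_permCongr {α : Type*} [DecidableEq α] {n k : ℕ} (e : α ≃ Fin n)
    {σ τ : Perm α} (hne : σ ≠ τ) (h : ∀ Y : Finset α, Y.card = k → Y.image (σ * τ⁻¹) ≠ Y) :
    (derangementGraph n k).Adj (e.permCongr σ) (e.permCongr τ) := by
  refine ⟨e.permCongr.injective.ne hne, fun X hX hfix => h (X.image e.symm) ?_ ?_⟩
  · rw [card_image_of_injective _ e.symm.injective, hX]
  · rw [← permCongrHom_coe, ← map_inv, ← map_mul] at hfix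
    nth_rewrite 2 [← hfix]
    rw [image_image, image_image]
    congr 1
    ext x
    simp [permCongr_apply]

section Affine

variable {F : Type*} [Field F]

def affinePerm (u : Fˣ) (b : F) : Perm F :=
  (Units.mulLeft u).trans (Equiv.addRight b)

@[simp]
lemma affinePerm_apply (u : Fˣ) (b x : F) : affinePerm u b x = u * x + b := rfl

lemma affinePerm_injective : Function.Injective (Function.uncurry (affinePerm (F := F))) := by
  rintro ⟨u₁, b₁⟩ ⟨u₂, b₂⟩ h
  have h₀ := congrArg (· 0) h
  have h₁ := congrArg (· 1) h
  simp only [Function.uncurry_apply_pair, affinePerm_apply, mul_zero, zero_add, mul_one] at h₀ h₁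
  rw [h₀, add_left_inj] at h₁
  exact Prod.ext (Units.ext h₁) h₀

lemma affinePerm_mul_inv (u₁ u₂ : Fˣ) (b₁ b₂ : F) :
    affinePerm u₁ b₁ * (affinePerm u₂ b₂)⁻¹ = affinePerm (u₁ / u₂) (b₁ - (u₁ / u₂ : Fˣ) * b₂) := by
  rw [mul_inv_eq_iff_eq_mul]
  ext x
  simp only [affinePerm_apply, Perm.coe_mul, Function.comp_apply, Units.val_div_eq_div_val]
  field_simp
  ring

lemma image_affinePerm_ne [DecidableEq F] {u : Fˣ} {b : F} (hu : u ≠ -1) (hid : u ≠ 1 ∨ b ≠ 0)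
    {Y : Finset F} (hY : Y.card = 2) : Y.image (affinePerm u b) ≠ Y := by
  obtain ⟨x, y, hxy, rfl⟩ := card_eq_two.mp hY
  intro hfix
  have hx : affinePerm u b x ∈ ({x, y} : Finset F) := hfix ▸ mem_image_of_mem _ (by simp)
  have hy : affinePerm u b y ∈ ({x, y} : Finset F) := hfix ▸ mem_image_of_mem _ (by simp)
  have hne : affinePerm u b x ≠ affinePerm u b y := (affinePerm u b).injective.ne hxy
  have hsub : x - y ≠ 0 := sub_ne_zero.mpr hxy
  simp only [mem_insert, mem_singleton] at hx hy
  rcases hx with hx | hx <;> rcases hy with hy | hy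
  · exact hne (hx.trans hy.symm)
  · simp only [affinePerm_apply] at hx hy
    have hu1 : (u : F) = 1 := by
      simpa [hsub, sub_eq_zero] using (by linear_combination hx - hy : ((u : F) - 1) * (x - y) = 0)
    have hb0 : b = 0 := by linear_combination hx - x * hu1
    exact hid.elim (fun h => h (Units.ext hu1)) (· hb0)
  · simp only [affinePerm_apply] at hx hy
    have hu1 : (u : F) = -1 := by
      simpa [hsub, add_eq_zero_iff_eq_neg] using
        (by linear_combination hx - hy : ((u : F) + 1) * (x - y) = 0)
    exact hu (Units.ext (by simpa using hu1))
  · exact hne (hx.trans hy.symm)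

lemma isClique_image_affinePerm [DecidableEq F] {n : ℕ} (e : F ≃ Fin n) {S : Finset Fˣ}
    (hS : ∀ u ∈ S, -u ∉ S) (T : Finset F) :
    (derangementGraph n 2).IsClique
      ((S ×ˢ T).image (e.permCongr ∘ Function.uncurry affinePerm) : Set (Perm (Fin n))) := by
  simp only [coe_image, coe_product]
  rintro _ ⟨⟨u₁, b₁⟩, ⟨hu₁, -⟩, rfl⟩ _ ⟨⟨u₂, b₂⟩, ⟨hu₂, -⟩, rfl⟩ hne
  simp only [Function.comp_apply, Function.uncurry_apply_pair] at hu₁ hu₂ hne ⊢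
  refine derangementGraph_adj_permCongr e (fun h => hne (by rw [h])) fun Y hY => ?_
  rw [affinePerm_mul_inv]
  refine image_affinePerm_ne (fun h => hS u₂ hu₂ ?_) ?_ hY
  · rw [div_eq_iff_eq_mul, neg_one_mul] at h
    exact h ▸ hu₁
  · by_contra! ⟨hu, hb⟩
    rw [hu, Units.val_one, one_mul, sub_eq_zero] at hb
    rw [div_eq_one] at hu
    exact hne (by rw [hu, hb])

end Affine

lemma Subgroup.IsComplement.mul_notMem {G : Type*} [Group G] {S : Set G} {H : Subgroup G}
    (hS : IsComplement S H) {u g : G} (hu : u ∈ S) (hg : g ∈ H) (hg1 : g ≠ 1) : u * g ∉ S := by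
  intro hug
  have := hS.1 (a₁ := (⟨u * g, hug⟩, ⟨g⁻¹, inv_mem hg⟩)) (a₂ := (⟨u, hu⟩, ⟨1, one_mem H⟩))
    (by simp)
  simp only [Prod.mk.injEq, Subtype.mk.injEq, mul_eq_left] at this
  exact hg1 this.1

lemma exists_finset_card_mul_orderOf_eq {G : Type*} [Group G] [Finite G] {g : G} (hg : g ≠ 1) :
    ∃ S : Finset G, S.card * orderOf g = Nat.card G ∧ ∀ u ∈ S, u * g ∉ S := by
  obtain ⟨S, hS, -⟩ := Subgroup.exists_isComplement_left (Subgroup.zpowers g) 1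
  refine ⟨S.toFinite.toFinset, ?_, fun u hu => ?_⟩
  · rw [← hS.card_mul_card, SetLike.coe_sort_coe, Nat.card_zpowers, Nat.card_coe_set_eq,
      Set.ncard_eq_toFinset_card S]
  · simpa using hS.mul_notMem (by simpa using hu) (Subgroup.mem_zpowers g) hg

theorem choose_two_le_chromaticNumber_derangementGraph {F : Type*} [Field F] [Finite F]
    (hF : ringChar F ≠ 2) {n : ℕ} (hn : Nat.card F = n) :
    (n.choose 2 : ℕ∞) ≤ (derangementGraph n 2).chromaticNumber := by
  classical
  subst hn
  have := Fintype.ofFinite F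
  have horder : orderOf (-1 : Fˣ) = 2 := by
    rw [← orderOf_units, Units.val_neg, Units.val_one, orderOf_neg_one, if_neg hF]
  obtain ⟨S, hScard, hS⟩ := exists_finset_card_mul_orderOf_eq (g := (-1 : Fˣ))
    (fun h => by simp [h] at horder)
  rw [horder, Nat.card_units] at hScard
  simp only [mul_neg_one] at hS
  have hclique := isClique_image_affinePerm (Finite.equivFin F) hS univ
  have hcard : ((S ×ˢ univ).image ((Finite.equivFin F).permCongr ∘
      Function.uncurry affinePerm)).card = (Nat.card F).choose 2 := by
    rw [card_image_of_injective _ ((Finite.equivFin F).permCongr.injective.comp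
      affinePerm_injective), card_product, card_univ, ← Nat.card_eq_fintype_card,
      Nat.choose_two_right, ← hScard, ← mul_assoc, Nat.mul_div_cancel _ two_pos, mul_comm]
  exact hcard ▸ hclique.card_le_chromaticNumber

/-- If `n = p^m` is a power of an odd prime, then the chromatic number of the
`2`-derangement graph equals `C(n,2) = n(n-1)/2`. -/
theorem chromaticNumber_derangementGraph_two (n p m : ℕ) (hp : p.Prime) (hodd : Odd p)
    (hm : 1 ≤ m) (hn : n = p ^ m) :
    (derangementGraph n 2).chromaticNumber = (n.choose 2 : ℕ∞) ∧
      (derangementGraph n 2).chromaticNumber = ((n * (n - 1) / 2 : ℕ) : ℕ∞) := by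
  have : Fact p.Prime := ⟨hp⟩
  have hp2 : p ≠ 2 := by rintro rfl; exact Nat.not_odd_iff_even.mpr even_two hodd
  have hchar : ringChar (GaloisField p m) ≠ 2 := by rwa [ringChar.eq (GaloisField p m) p]
  have hcard : Nat.card (GaloisField p m) = n := by rw [GaloisField.card p m (by omega), hn]
  have htwo : 2 ≤ n := hn ▸ hp.two_le.trans (Nat.le_self_pow (by omega) p)
  have hχ : (derangementGraph n 2).chromaticNumber = n.choose 2 :=
    le_antisymm (chromaticNumber_derangementGraph_le_choose htwo)
      (choose_two_le_chromaticNumber_derangementGraph hchar hcard)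
  exact ⟨hχ, by rw [hχ, Nat.choose_two_right]⟩
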